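/- With the test function F = F_{τ1,τ2,X1,X2,R1,R2}, for every A > 0 with A ≤ 1/(4·X1²·X2²) one has 𝒥_{βαβ,F}(A) = 0. -/
import Mathlib


open MeasureTheory

noncomputable section

/-- `e(x) = exp(2πix)`. -/
def e (x : ℝ) : ℂ := Complex.exp (2 * Real.pi * Complex.I * (x : ℂ))

/-- `ξ_{βαβ,1}` in coordinates `(x2, x4, x5)`. -/
def ξbab1 (x2 x4 x5 : ℝ) : ℝ := x4 ^ 2 + x5 ^ 2 + 1

/-- `ξ_{βαβ,2}`. -/
def ξbab2 (x2 x4 x5 : ℝ) : ℝ :=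
  (x4 ^ 2 - x2 * x5) ^ 2 + x2 ^ 2 + 2 * x4 ^ 2 + x5 ^ 2 + 1

/-- `ζ_{βαβ,1}`. -/
def ζbab1 (x2 x4 x5 : ℝ) : ℝ := x4 * (x2 + x5)

/-- `ζ_{βαβ,2}`. -/
def ζbab2 (x2 x4 x5 : ℝ) : ℝ := x4 ^ 2 * x5 - x2 * x5 ^ 2 - x2

/-- The integrand of the inner `ℝ³`-integral of `𝒥_{βαβ,F}`. -/
def JbabIntegrand (F : ℝ → ℝ → ℂ) (A y1 y2 x2 x4 x5 : ℝ) : ℂ :=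
  e (ζbab1 x2 x4 x5 * y1 / ξbab1 x2 x4 x5) *
  e (ζbab2 x2 x4 x5 / (ξbab2 x2 x4 x5 * y1 ^ 2 * y2)) *
  e (-(A * x5 * y2)) *
  F (Real.sqrt (ξbab2 x2 x4 x5) * y1 / ξbab1 x2 x4 x5)
    (ξbab1 x2 x4 x5 / (ξbab2 x2 x4 x5 * y1 ^ 2 * y2)) *
  (starRingEnd ℂ) (F y1 (A * y2))

/-- The arithmetic transform `𝒥_{βαβ,F}(A)`. -/
def Jbab (F : ℝ → ℝ → ℂ) (A : ℝ) : ℂ :=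
  ((A : ℂ) ^ 3)⁻¹ *
    ∫ y in Set.Ioi (0 : ℝ) ×ˢ Set.Ioi (0 : ℝ),
      (∫ x : ℝ × ℝ × ℝ, JbabIntegrand F A y.1 y.2 x.1 x.2.1 x.2.2) /
        ((y.1 : ℂ) ^ 2 * (y.2 : ℂ))

/-- The normalising factor `ℛ = R1·R2·(R1+R2)·(R2−R1+1)`. -/
def Rfac (R1 R2 : ℝ) : ℝ := R1 * R2 * (R1 + R2) * (R2 - R1 + 1)

/-- The test function `F_{τ1,τ2,X1,X2,R1,R2}`. -/
def Ftest (f : ℝ → ℝ) (τ1 τ2 X1 X2 R1 R2 : ℝ) (y1 y2 : ℝ) : ℂ :=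
  (Real.sqrt (Rfac R1 R2) : ℂ) * (f (X1 * y1) : ℂ) * (f (X2 * y2) : ℂ) *
    (y1 : ℂ) ^ (Complex.I * ((τ1 : ℂ) + (τ2 : ℂ))) *
    (y2 : ℂ) ^ (Complex.I * (τ2 : ℂ))

/-- vanishing of `𝒥_{βαβ,F}(A)` for small `A`. -/
theorem Jbab_vanishing (f : ℝ → ℝ) (hf_smooth : ContDiff ℝ (⊤ : ℕ∞) f)
    (hf_range : ∀ y, f y ∈ Set.Icc (0:ℝ) 1)
    (hf_supp : tsupport f ⊆ Set.Icc 1 2) (hf_ne : f ≠ 0)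
    (τ1 τ2 X1 X2 R1 R2 : ℝ) (hτ1 : 0 ≤ τ1) (hτ2 : 0 ≤ τ2)
    (hX1 : 1 ≤ X1) (hX2 : 1 ≤ X2) (hR1 : 1 ≤ R1) (hR12 : R1 ≤ R2)
    (A : ℝ) (hA : 0 < A) (hAle : A ≤ 1 / (4 * X1 ^ 2 * X2 ^ 2)) :
    Jbab (Ftest f τ1 τ2 X1 X2 R1 R2) A = 0 := by
  have hX1p : (0:ℝ) < X1 := lt_of_lt_of_le one_pos hX1
  have hX2p : (0:ℝ) < X2 := lt_of_lt_of_le one_pos hX2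
  have hAle' : 4 * A * X1 ^ 2 * X2 ^ 2 ≤ 1 := by
    have hpos : (0:ℝ) < 4 * X1 ^ 2 * X2 ^ 2 := by positivity
    rw [le_div_iff₀ hpos] at hAle
    nlinarith
  -- f vanishes below 1
  have hf_lt : ∀ x : ℝ, x < 1 → f x = 0 := by
    intro x hx
    apply image_eq_zero_of_notMem_tsupport
    intro hmem
    exact absurd (hf_supp hmem).1 (not_le.2 hx)
  have hmem_of_ne : ∀ x : ℝ, f x ≠ 0 → 1 ≤ x := by
    intro x hx
    exact (hf_supp (subset_tsupport f hx)).1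
  have hzero : ∀ y1 y2 x2 x4 x5 : ℝ,
      JbabIntegrand (Ftest f τ1 τ2 X1 X2 R1 R2) A y1 y2 x2 x4 x5 = 0 := by
    intro y1 y2 x2 x4 x5
    unfold JbabIntegrand
    by_cases h1 : f (X1 * y1) = 0
    · simp [Ftest, h1]
    by_cases h2 : f (X2 * (A * y2)) = 0
    · simp [Ftest, h2]
    -- support bounds
    have hy1 : 1 ≤ X1 * y1 := hmem_of_ne _ h1
    have hy2 : 1 ≤ X2 * (A * y2) := hmem_of_ne _ h2
    have hy1p : 0 < y1 := by nlinarith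
    have hy2p : 0 < y2 := by
      by_contra h
      push_neg at h
      nlinarith [mul_nonneg hX2p.le (mul_nonneg hA.le (neg_nonneg.2 h))]
    have hξ1 : (1:ℝ) ≤ ξbab1 x2 x4 x5 := by unfold ξbab1; nlinarith [sq_nonneg x4, sq_nonneg x5]
    have hξ12 : ξbab1 x2 x4 x5 ≤ ξbab2 x2 x4 x5 := by
      unfold ξbab1 ξbab2
      nlinarith [sq_nonneg (x4 ^ 2 - x2 * x5), sq_nonneg x2, sq_nonneg x4]
    have hξ2p : (0:ℝ) < ξbab2 x2 x4 x5 := lt_of_lt_of_le one_pos (le_trans hξ1 hξ12)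
    have hden : (0:ℝ) < ξbab2 x2 x4 x5 * y1 ^ 2 * y2 := by positivity
    have hsq : 1 ≤ (X1 * y1) ^ 2 := by nlinarith
    have h4 : 1 ≤ (X1 * y1) ^ 2 * (X2 * (A * y2)) := by
      have := mul_le_mul hsq hy2 zero_le_one (sq_nonneg (X1 * y1))
      linarith
    have hty : 4 * X2 ≤ y1 ^ 2 * y2 := by
      nlinarith [mul_pos hA (mul_pos (mul_pos hX1p hX1p) hX2p)]
    have hξ1p : (0:ℝ) < ξbab1 x2 x4 x5 := lt_of_lt_of_le one_pos hξ1
    have key : f (X2 * (ξbab1 x2 x4 x5 / (ξbab2 x2 x4 x5 * y1 ^ 2 * y2))) = 0 := by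
      apply hf_lt
      rw [mul_div_assoc', div_lt_one hden]
      nlinarith [mul_le_mul_of_nonneg_left hty hξ1p.le,
        mul_le_mul_of_nonneg_right hξ12 (by positivity : (0:ℝ) ≤ y1 ^ 2 * y2),
        mul_pos hX2p hξ1p]
    simp [Ftest, key]
  have hinner : ∀ y : ℝ × ℝ,
      (∫ x : ℝ × ℝ × ℝ,
        JbabIntegrand (Ftest f τ1 τ2 X1 X2 R1 R2) A y.1 y.2 x.1 x.2.1 x.2.2) = 0 := by
    intro y
    simp [hzero]
  unfold Jbab
  rw [setIntegral_congr_fun (by measurability) (fun y _ => by rw [hinner y, zero_div])]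
  simp
end
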